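/- Barcodes with overlap matchings under overlap composition form a category: overlap composition of overlap matchings is an overlap matching, it is associative, and the identity matching on a barcode (matching each interval to itself) is an identity for overlap composition. -/
import Mathlib


/-- A matching (partial injective function), viewed as a relation. -/
def IsMatching {S T : Type*} (σ : S → T → Prop) : Prop :=
  (∀ s t t', σ s t → σ s t' → t = t') ∧ (∀ s s' t, σ s t → σ s' t → s = s')

/-- Relational composition. -/
def compM {S T U : Type*} (σ : S → T → Prop) (τ : T → U → Prop) : S → U → Prop :=
  fun s u => ∃ t, σ s t ∧ τ t u

/-- `I` bounds `J` above: for all `s ∈ J` there exists `t ∈ I` with `s ≤ t`. -/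
def BoundsAbove (I J : Set ℝ) : Prop := ∀ s ∈ J, ∃ t ∈ I, s ≤ t

/-- `J` bounds `I` below: for all `t ∈ I` there exists `s ∈ J` with `s ≤ t`. -/
def BoundsBelow (J I : Set ℝ) : Prop := ∀ t ∈ I, ∃ s ∈ J, s ≤ t

/-- `I` overlaps `J` above: `I ∩ J ≠ ∅`, `I` bounds `J` above, and `J` bounds `I` below. -/
def OverlapsAbove (I J : Set ℝ) : Prop :=
  (I ∩ J).Nonempty ∧ BoundsAbove I J ∧ BoundsBelow J I

/-- A barcode is represented by a family of intervals `b : X → Set ℝ` over an index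
set `X`.  `IsBarcode b` asserts that each member is a nonempty interval
(convex subset) of ℝ. -/
def IsBarcode {X : Type*} (b : X → Set ℝ) : Prop :=
  ∀ x, Convex ℝ (b x) ∧ (b x).Nonempty

/-- An overlap matching between barcodes `bC : X → Set ℝ` and `bD : Y → Set ℝ`:
a matching of the index sets such that whenever `x` is matched to `y`, the interval
`bC x` overlaps the interval `bD y` above. -/
def IsOverlapMatching {X Y : Type*} (bC : X → Set ℝ) (bD : Y → Set ℝ)
    (σ : X → Y → Prop) : Prop :=
  IsMatching σ ∧ ∀ x y, σ x y → OverlapsAbove (bC x) (bD y)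

/-- The overlap composition of matchings between barcodes: the relational composition,
restricted to the pairs whose intervals overlap above. -/
def ovComp {X Y Z : Type*} (bB : X → Set ℝ) (bD : Z → Set ℝ)
    (σ : X → Y → Prop) (τ : Y → Z → Prop) : X → Z → Prop :=
  fun x z => (∃ y, σ x y ∧ τ y z) ∧ OverlapsAbove (bB x) (bD z)


private lemma convex_mem {s : Set ℝ} (hs : Convex ℝ s) {a b p : ℝ}
    (ha : a ∈ s) (hb : b ∈ s) (h1 : a ≤ p) (h2 : p ≤ b) : p ∈ s :=
  hs.ordConnected.out ha hb ⟨h1, h2⟩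

private lemma boundsAbove_trans {I J K : Set ℝ} (h1 : BoundsAbove I J)
    (h2 : BoundsAbove J K) : BoundsAbove I K := by
  intro s hs
  obtain ⟨t, ht, hst⟩ := h2 s hs
  obtain ⟨u, hu, htu⟩ := h1 t ht
  exact ⟨u, hu, hst.trans htu⟩

private lemma boundsBelow_trans {I J K : Set ℝ} (h1 : BoundsBelow K J)
    (h2 : BoundsBelow J I) : BoundsBelow K I := by
  intro t ht
  obtain ⟨s, hs, hst⟩ := h2 t ht
  obtain ⟨u, hu, hus⟩ := h1 s hs
  exact ⟨u, hu, hus.trans hst⟩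

/-- middle overlap, lower version: if B≥C≥D≥E as overlaps and B∩E ≠ ∅ and D convex,
then B overlaps D above. -/
private lemma mid_overlap₁ {Bs Cs Ds Es : Set ℝ} (hDconv : Convex ℝ Ds)
    (h1 : OverlapsAbove Bs Cs) (h2 : OverlapsAbove Cs Ds) (h3 : OverlapsAbove Ds Es)
    (h4 : (Bs ∩ Es).Nonempty) : OverlapsAbove Bs Ds := by
  obtain ⟨p, hpB, hpE⟩ := h4
  obtain ⟨c, hc, hcp⟩ := h1.2.2 p hpB
  obtain ⟨d, hd, hdc⟩ := h2.2.2 c hc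
  obtain ⟨d', hd', hpd'⟩ := h3.2.1 p hpE
  refine ⟨⟨p, hpB, convex_mem hDconv hd hd' (hdc.trans hcp) hpd'⟩,
    boundsAbove_trans h1.2.1 h2.2.1, boundsBelow_trans h2.2.2 h1.2.2⟩

private lemma mid_overlap₂ {Bs Cs Ds Es : Set ℝ} (hCconv : Convex ℝ Cs)
    (h1 : OverlapsAbove Bs Cs) (h2 : OverlapsAbove Cs Ds) (h3 : OverlapsAbove Ds Es)
    (h4 : (Bs ∩ Es).Nonempty) : OverlapsAbove Cs Es := by
  obtain ⟨p, hpB, hpE⟩ := h4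
  obtain ⟨c, hc, hcp⟩ := h1.2.2 p hpB
  obtain ⟨d, hd, hpd⟩ := h3.2.1 p hpE
  obtain ⟨c', hc', hdc'⟩ := h2.2.1 d hd
  refine ⟨⟨p, convex_mem hCconv hc hc' hcp (hpd.trans hdc'), hpE⟩,
    boundsAbove_trans h2.2.1 h3.2.1, boundsBelow_trans h3.2.2 h2.2.2⟩

/-- barcodes with overlap matchings under overlap composition form a
category: the overlap composition of overlap matchings is an overlap matching, overlap
composition is associative, and the identity matching of a barcode (matching each
interval to itself) is a two-sided identity for overlap composition. -/
theorem barcode_category_laws {B C D E : Type*}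
    (bB : B → Set ℝ) (bC : C → Set ℝ) (bD : D → Set ℝ) (bE : E → Set ℝ)
    (hB : IsBarcode bB) (hC : IsBarcode bC) (hD : IsBarcode bD) (hE : IsBarcode bE)
    (σ : B → C → Prop) (τ : C → D → Prop) (υ : D → E → Prop)
    (hσ : IsOverlapMatching bB bC σ) (hτ : IsOverlapMatching bC bD τ)
    (hυ : IsOverlapMatching bD bE υ) :
    IsOverlapMatching bB bD (ovComp bB bD σ τ) ∧
    ovComp bB bE (ovComp bB bD σ τ) υ = ovComp bB bE σ (ovComp bC bE τ υ) ∧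
    ovComp bB bC (Eq : B → B → Prop) σ = σ ∧
    ovComp bB bC σ (Eq : C → C → Prop) = σ := by
  obtain ⟨⟨σf, σi⟩, σo⟩ := hσ
  obtain ⟨⟨τf, τi⟩, τo⟩ := hτ
  obtain ⟨⟨υf, υi⟩, υo⟩ := hυ
  refine ⟨⟨⟨?_, ?_⟩, ?_⟩, ?_, ?_, ?_⟩
  · rintro x z z' ⟨⟨y, hxy, hyz⟩, -⟩ ⟨⟨y', hxy', hyz'⟩, -⟩
    exact τf y z z' hyz (σf x y y' hxy hxy' ▸ hyz')
  · rintro x x' z ⟨⟨y, hxy, hyz⟩, -⟩ ⟨⟨y', hxy', hyz'⟩, -⟩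
    exact σi x x' y hxy (τi y y' z hyz hyz' ▸ hxy')
  · rintro x z ⟨-, h⟩
    exact h
  · funext x w
    apply propext
    constructor
    · rintro ⟨⟨z, ⟨⟨y, hxy, hyz⟩, -⟩, hzw⟩, hov⟩
      exact ⟨⟨y, hxy, ⟨z, hyz, hzw⟩,
        mid_overlap₂ (hC y).1 (σo x y hxy) (τo y z hyz) (υo z w hzw) hov.1⟩, hov⟩
    · rintro ⟨⟨y, hxy, ⟨z, hyz, hzw⟩, -⟩, hov⟩
      exact ⟨⟨z, ⟨⟨y, hxy, hyz⟩,
        mid_overlap₁ (hD z).1 (σo x y hxy) (τo y z hyz) (υo z w hzw) hov.1⟩, hzw⟩, hov⟩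
  · funext x y
    apply propext
    constructor
    · rintro ⟨⟨x', rfl, hxy⟩, -⟩
      exact hxy
    · exact fun h => ⟨⟨x, rfl, h⟩, σo x y h⟩
  · funext x y
    apply propext
    constructor
    · rintro ⟨⟨y', hxy, rfl⟩, -⟩
      exact hxy
    · exact fun h => ⟨⟨y, h, rfl⟩, σo x y h⟩
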